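/- arXiv:2207.10579 — 3 statements merged into one kernel-verified Lean document; each statement's English description precedes it below -/
import Mathlib

section
/- In a two-qubit VBQC test round where the trap qubit is prepared with fidelity F_trap (with respect to |+_θ⟩, as a mixture in the {|+_θ⟩, |-_θ⟩} basis with arbitrary coherences) and the dummy qubit with fidelity F_dummy (with respect to |d⟩, as a mixture in the computational basis with arbitrary coherences), after the server applies a CZ gate between them and measures the trap qubit in the {|+_θ⟩, |-_θ⟩} basis, the probability of the incorrect outcome is p_fail = F_dummy(1 - F_trap) + F_trap(1 - F_dummy). -/
open Matrix Complex

noncomputable section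

/-- Outer product `|v⟩⟨w|`. -/
def outer (v w : Fin 2 → ℂ) : Matrix (Fin 2) (Fin 2) ℂ :=
  fun i j => v i * (starRingEnd ℂ) (w j)

def ket0 : Fin 2 → ℂ := ![1, 0]
def ket1 : Fin 2 → ℂ := ![0, 1]

/-- `|+_θ⟩ = (|0⟩ + e^{iθ}|1⟩)/√2`. -/
def ketPlus (θ : ℝ) : Fin 2 → ℂ :=
  ![(Real.sqrt 2 : ℂ)⁻¹, Complex.exp (θ * Complex.I) * (Real.sqrt 2 : ℂ)⁻¹]

/-- `|-_θ⟩ = (|0⟩ - e^{iθ}|1⟩)/√2`. -/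
def ketMinus (θ : ℝ) : Fin 2 → ℂ :=
  ![(Real.sqrt 2 : ℂ)⁻¹, -(Complex.exp (θ * Complex.I) * (Real.sqrt 2 : ℂ)⁻¹)]

/-- Kronecker (tensor) product of two single-qubit matrices. -/
def kron (A B : Matrix (Fin 2) (Fin 2) ℂ) :
    Matrix (Fin 2 × Fin 2) (Fin 2 × Fin 2) ℂ :=
  fun p q => A p.1 q.1 * B p.2 q.2

/-- The controlled-Z gate. -/
def CZ : Matrix (Fin 2 × Fin 2) (Fin 2 × Fin 2) ℂ :=
  fun p q => if p = q then (if p = (1, 1) then -1 else 1) else 0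

/-- in a two-qubit VBQC test round (with `d = 0`), with dummy state
`F_dummy|0⟩⟨0| + (1-F_dummy)|1⟩⟨1| + a|0⟩⟨1| + a*|1⟩⟨0|` and trap state
`F_trap|+_θ⟩⟨+_θ| + (1-F_trap)|-_θ⟩⟨-_θ| + b|+_θ⟩⟨-_θ| + b*|-_θ⟩⟨+_θ|`,
after a CZ between dummy and trap and a measurement of the trap in the
`{|+_θ⟩, |-_θ⟩}` basis, the probability of the incorrect outcome `|-_θ⟩` is
`F_dummy(1 - F_trap) + F_trap(1 - F_dummy)`. -/
theorem vbqc_test_round_failure_probability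
    (Fd Ft : ℝ) (hFd0 : 0 ≤ Fd) (hFd1 : Fd ≤ 1) (hFt0 : 0 ≤ Ft) (hFt1 : Ft ≤ 1)
    (θ : ℝ) (a b : ℂ) :
    (Matrix.trace
        (kron 1 (outer (ketMinus θ) (ketMinus θ)) *
          (CZ *
            kron
              ((Fd : ℂ) • outer ket0 ket0 + ((1 - Fd : ℝ) : ℂ) • outer ket1 ket1 +
                a • outer ket0 ket1 + (starRingEnd ℂ) a • outer ket1 ket0)
              ((Ft : ℂ) • outer (ketPlus θ) (ketPlus θ) +
                ((1 - Ft : ℝ) : ℂ) • outer (ketMinus θ) (ketMinus θ) +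
                b • outer (ketPlus θ) (ketMinus θ) +
                (starRingEnd ℂ) b • outer (ketMinus θ) (ketPlus θ)) *
            CZ))).re =
      Fd * (1 - Ft) + Ft * (1 - Fd) := by
  have hr : (Real.sqrt 2) * (Real.sqrt 2) = 2 := Real.mul_self_sqrt (by norm_num)
  have h2 : ((Real.sqrt 2 : ℂ))⁻¹ * ((Real.sqrt 2:ℂ))⁻¹ = (2:ℂ)⁻¹ := by
    rw [← mul_inv]; norm_cast
    rw [hr]; norm_num
  have he : Complex.exp (θ * Complex.I) * (starRingEnd ℂ) (Complex.exp (θ * Complex.I)) = 1 := by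
    rw [← Complex.exp_conj, ← Complex.exp_add]
    have : (θ : ℂ) * Complex.I + (starRingEnd ℂ) (θ * Complex.I) = 0 := by
      simp [Complex.conj_I]
    rw [this, Complex.exp_zero]
  simp only [Matrix.trace, Matrix.diag, Matrix.mul_apply, Fin.sum_univ_two, Fintype.sum_prod_type,
    kron, CZ, outer, ket0, ket1, ketPlus, ketMinus, Matrix.add_apply, Matrix.smul_apply,
    Matrix.one_apply, smul_eq_mul, Matrix.cons_val_zero, Matrix.cons_val_one, Matrix.head_cons,
    _root_.map_mul, map_add, map_neg, map_inv₀, Complex.conj_ofReal]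
  simp only [Prod.mk.injEq, if_true, if_false]
  norm_num
  ring_nf
  have h4 : Real.sqrt 2 ^ 4 = 4 := by nlinarith [hr]
  have hs : Real.sin θ ^ 2 = 1 - Real.cos θ ^ 2 := by nlinarith [Real.sin_sq_add_cos_sq θ]
  rw [hs]; ring_nf; rw [h4]
  rw [show Real.sin θ ^ 4 = (Real.sin θ ^ 2) ^ 2 by ring, hs]; ring
end
end

section
/- Suppose the dummy qubit is prepared at the server with fidelity F_dummy, then stored in a depolarizing memory with coherence time T for a random time Δt with E[Δt] = 1/R, after which the trap qubit is prepared with fidelity F_trap; assume F_dummy(1-F_trap) + F_trap(1-F_dummy) ≤ 1/2 and that F_dummy, F_trap, Δt are independent random variables with means F̄_dummy, F̄_trap, 1/R. Then the average test-round failure probability satisfies q ≤ e^{-1/(RT)}[F̄_dummy(1-F̄_trap) + F̄_trap(1-F̄_dummy)] + (1 - e^{-1/(RT)})/2. -/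
open MeasureTheory ProbabilityTheory

/-!
The failure probability `s F + (1 - s) / 2`, with `s = e^{-Δt/T}` and
`F = F_d (1 - F_t) + F_t (1 - F_d)`, is affine in `s` with slope `F - 1/2`, and `F` is affine in
each fidelity separately. Independence therefore lets us take expectations inside:
`q = E[s] · F(F̄_d, F̄_t) + (1 - E[s]) / 2`. The slope `F(F̄_d, F̄_t) - 1/2` is nonpositive, so
replacing `E[s]` by its Jensen lower bound `e^{-E[Δt]/T}` can only increase the right-hand side.
-/

/-- Fidelity `F` after a depolarizing channel that keeps the state with weight `s`. -/
noncomputable def depolarize (s F : ℝ) : ℝ := s * F + (1 - s) / 2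

/-- Failure probability of a test round whose dummy and trap qubits have fidelities `Fd`, `Ft`. -/
noncomputable def testRoundFailure (Fd Ft : ℝ) : ℝ := Fd * (1 - Ft) + Ft * (1 - Fd)

lemma antitone_depolarize_of_le_half {F : ℝ} (hF : F ≤ 1 / 2) : Antitone (depolarize · F) :=
  fun s t hst => by simp only [depolarize]; nlinarith

lemma exp_integral_le_integral_exp {Ω : Type*} [MeasurableSpace Ω] {μ : Measure Ω}
    [IsProbabilityMeasure μ] {f : Ω → ℝ} (hf : Integrable f μ)
    (hexp : Integrable (fun ω => Real.exp (f ω)) μ) :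
    Real.exp (∫ ω, f ω ∂μ) ≤ ∫ ω, Real.exp (f ω) ∂μ :=
  convexOn_exp.map_integral_le Real.continuous_exp.continuousOn isClosed_univ
    (.of_forall fun _ => Set.mem_univ _) hf hexp

lemma integrable_exp_neg_div {Ω : Type*} [MeasurableSpace Ω] {μ : Measure Ω} [IsFiniteMeasure μ]
    {X : Ω → ℝ} (hX : AEMeasurable X μ) (hX0 : ∀ᵐ ω ∂μ, 0 ≤ X ω) {T : ℝ} (hT : 0 ≤ T) :
    Integrable (fun ω => Real.exp (-(X ω / T))) μ := by
  refine .of_bound (by fun_prop) 1 ?_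
  filter_upwards [hX0] with ω hω
  rw [Real.norm_of_nonneg (Real.exp_pos _).le, Real.exp_le_one_iff, neg_nonpos]
  exact div_nonneg hω hT

lemma testRoundFailure_eq (a b : ℝ) : testRoundFailure a b = a + b - 2 * (a * b) := by
  unfold testRoundFailure; ring

namespace ProbabilityTheory.IndepFun

variable {Ω : Type*} [MeasurableSpace Ω] {μ : Measure Ω} {X Y : Ω → ℝ}

lemma integral_depolarize [IsProbabilityMeasure μ] (hXY : IndepFun X Y μ)
    (hX : Integrable X μ) (hY : Integrable Y μ) :
    ∫ ω, depolarize (X ω) (Y ω) ∂μ = depolarize (∫ ω, X ω ∂μ) (∫ ω, Y ω ∂μ) := by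
  unfold depolarize
  rw [integral_add (by exact hXY.integrable_mul hX hY) (by fun_prop), integral_div,
    integral_sub (integrable_const 1) hX, hXY.integral_fun_mul_eq_mul_integral hX.1 hY.1]
  simp

lemma integrable_testRoundFailure (hXY : IndepFun X Y μ) (hX : Integrable X μ)
    (hY : Integrable Y μ) : Integrable (fun ω => testRoundFailure (X ω) (Y ω)) μ := by
  simp_rw [testRoundFailure_eq]
  exact (hX.add hY).sub ((hXY.integrable_mul hX hY).const_mul 2)

lemma integral_testRoundFailure [IsProbabilityMeasure μ] (hXY : IndepFun X Y μ)
    (hX : Integrable X μ) (hY : Integrable Y μ) :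
    ∫ ω, testRoundFailure (X ω) (Y ω) ∂μ = testRoundFailure (∫ ω, X ω ∂μ) (∫ ω, Y ω ∂μ) := by
  simp_rw [testRoundFailure_eq]
  rw [integral_sub (by exact hX.add hY) (by exact (hXY.integrable_mul hX hY).const_mul 2),
    integral_add hX hY, integral_const_mul, hXY.integral_fun_mul_eq_mul_integral hX.1 hY.1]

end ProbabilityTheory.IndepFun

theorem vbqc_average_failure_probability_bound_general
    {Ω : Type*} [MeasurableSpace Ω] (μ : Measure Ω) [IsProbabilityMeasure μ]
    (Fd Ft Δt : Ω → ℝ)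
    (hΔt : ∀ ω, 0 ≤ Δt ω)
    (hiFd : Integrable Fd μ) (hiFt : Integrable Ft μ) (hiΔt : Integrable Δt μ)
    (hindep : iIndepFun ![Fd, Ft, Δt] μ)
    (R T FdBar FtBar : ℝ) (hT : 0 < T)
    (hmFd : ∫ ω, Fd ω ∂μ = FdBar) (hmFt : ∫ ω, Ft ω ∂μ = FtBar)
    (hmΔt : ∫ ω, Δt ω ∂μ = 1 / R)
    (hhalf : FdBar * (1 - FtBar) + FtBar * (1 - FdBar) ≤ 1 / 2) :
    (∫ ω, (Real.exp (-(Δt ω / T)) * (Fd ω * (1 - Ft ω) + Ft ω * (1 - Fd ω)) +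
        (1 - Real.exp (-(Δt ω / T))) / 2) ∂μ) ≤
      Real.exp (-(1 / (R * T))) * (FdBar * (1 - FtBar) + FtBar * (1 - FdBar)) +
        (1 - Real.exp (-(1 / (R * T)))) / 2 := by
  have hmeas : ∀ i, AEMeasurable (![Fd, Ft, Δt] i) μ := by
    intro i; fin_cases i
    exacts [hiFd.aemeasurable, hiFt.aemeasurable, hiΔt.aemeasurable]
  have hFdFt : IndepFun Fd Ft μ := hindep.indepFun (i := 0) (j := 1) (by decide)
  have hsurvival_failure : IndepFun (fun ω => Real.exp (-(Δt ω / T)))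
      (fun ω => testRoundFailure (Fd ω) (Ft ω)) μ :=
    ((hindep.indepFun_prodMk₀ hmeas 0 1 2 (by decide) (by decide)).comp
      (φ := fun p : ℝ × ℝ => testRoundFailure p.1 p.2) (ψ := fun t => Real.exp (-(t / T)))
      (by unfold testRoundFailure; fun_prop) (by fun_prop)).symm
  have hiexp := integrable_exp_neg_div hiΔt.aemeasurable (.of_forall hΔt) hT.le
  have hjensen : Real.exp (-(1 / (R * T))) ≤ ∫ ω, Real.exp (-(Δt ω / T)) ∂μ := by
    have h := exp_integral_le_integral_exp (f := fun ω => -(Δt ω / T))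
      (hiΔt.div_const T).neg hiexp
    rwa [integral_neg, integral_div, hmΔt, div_div] at h
  calc _ = ∫ ω, depolarize (Real.exp (-(Δt ω / T))) (testRoundFailure (Fd ω) (Ft ω)) ∂μ := rfl
    _ = depolarize (∫ ω, Real.exp (-(Δt ω / T)) ∂μ) (testRoundFailure FdBar FtBar) := by
      rw [hsurvival_failure.integral_depolarize hiexp
          (hFdFt.integrable_testRoundFailure hiFd hiFt), hFdFt.integral_testRoundFailure hiFd hiFt, hmFd, hmFt]
    _ ≤ _ := antitone_depolarize_of_le_half hhalf hjensen

/-- bound on the average VBQC test-round failure probability.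
The per-round failure probability is
`p_fail = e^{-Δt/T}[F_d(1-F_t) + F_t(1-F_d)] + (1 - e^{-Δt/T})/2`;
with `F_d, F_t, Δt` independent, `E[F_d] = F̄_d`, `E[F_t] = F̄_t`, `E[Δt] = 1/R`
and `F̄_d(1-F̄_t) + F̄_t(1-F̄_d) ≤ 1/2`, the average failure probability is at most
`e^{-1/(RT)}[F̄_d(1-F̄_t) + F̄_t(1-F̄_d)] + (1 - e^{-1/(RT)})/2`. -/
theorem vbqc_average_failure_probability_bound
    {Ω : Type*} [MeasurableSpace Ω] (μ : Measure Ω) [IsProbabilityMeasure μ]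
    (Fd Ft Δt : Ω → ℝ)
    (hFd01 : ∀ ω, Fd ω ∈ Set.Icc (0 : ℝ) 1)
    (hFt01 : ∀ ω, Ft ω ∈ Set.Icc (0 : ℝ) 1)
    (hΔt : ∀ ω, 0 ≤ Δt ω)
    (hiFd : Integrable Fd μ) (hiFt : Integrable Ft μ) (hiΔt : Integrable Δt μ)
    (hindep : iIndepFun ![Fd, Ft, Δt] μ)
    (R T FdBar FtBar : ℝ) (hR : 0 < R) (hT : 0 < T)
    (hmFd : ∫ ω, Fd ω ∂μ = FdBar) (hmFt : ∫ ω, Ft ω ∂μ = FtBar)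
    (hmΔt : ∫ ω, Δt ω ∂μ = 1 / R)
    (hhalf : FdBar * (1 - FtBar) + FtBar * (1 - FdBar) ≤ 1 / 2) :
    (∫ ω, (Real.exp (-(Δt ω / T)) * (Fd ω * (1 - Ft ω) + Ft ω * (1 - Fd ω)) +
        (1 - Real.exp (-(Δt ω / T))) / 2) ∂μ) ≤
      Real.exp (-(1 / (R * T))) * (FdBar * (1 - FtBar) + FtBar * (1 - FdBar)) +
        (1 - Real.exp (-(1 / (R * T)))) / 2 :=
  vbqc_average_failure_probability_bound_general μ Fd Ft Δt hΔt hiFd hiFt hiΔt hindep R T FdBar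
    FtBar hT hmFd hmFt hmΔt hhalf
end

section
/- The average teleportation fidelity over the Haar measure can be decomposed as F_tel = (1/3) F̄_dummy + (2/3) F̄_trap, where F̄_dummy is the average fidelity of the teleportation channel on the states |0⟩ and |1⟩, and F̄_trap is the average fidelity over the eight states |+_{iπ/4}⟩ for i = 0,...,7. -/
/-!
The fidelity `ψ ↦ Re ⟨ψ|Λ(|ψ⟩⟨ψ|)|ψ⟩` is the real part of a quartic form in `ψ` and `ψ̄`, so its
average under any probability measure on the unit sphere depends only on the fourth moments
`∫ ψ_a ψ̄_b ψ̄_c ψ_d`. For a unitarily invariant measure, invariance under `diag(1, ζ)` kills every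
moment whose charge `a - b - c + d` is nonzero; invariance under the swap and the Hadamard gate,
together with normalisation, fixes the remaining ones to Weingarten's values
`(δ_ab δ_cd + δ_ac δ_bd) / 6`. The ten-point average on the right-hand side has the same fourth
moments: the poles `|0⟩, |1⟩` only see the diagonal moments, and on the equator the charge is
detected by a sum over the eighth roots of unity.
-/

open MeasureTheory Matrix Complex

noncomputable section

/-- Fidelity of a single-qubit channel `Λ` on the pure state `ψ`. -/
def fid (Λ : Matrix (Fin 2) (Fin 2) ℂ →ₗ[ℂ] Matrix (Fin 2) (Fin 2) ℂ)
    (ψ : Fin 2 → ℂ) : ℝ :=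
  (star ψ ⬝ᵥ (Λ (outer ψ ψ)).mulVec ψ).re

open ComplexConjugate

def quarticMonomial {ι : Type*} (a b c d : ι) (ψ : ι → ℂ) : ℂ :=
  ψ a * conj (ψ b) * conj (ψ c) * ψ d

@[fun_prop]
lemma continuous_quarticMonomial {ι : Type*} (a b c d : ι) :
    Continuous (quarticMonomial a b c d) := by
  unfold quarticMonomial
  fun_prop

lemma quarticMonomial_swap_middle {ι : Type*} (a b c d : ι) :
    quarticMonomial a b c d = quarticMonomial a c b d := by
  funext ψ
  simp only [quarticMonomial]
  ring

lemma quarticMonomial_swap_outer {ι : Type*} (a b c d : ι) :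
    quarticMonomial a b c d = quarticMonomial d b c a := by
  funext ψ
  simp only [quarticMonomial]
  ring

def quarticForm {ι : Type*} [Fintype ι] (L : ι → ι → ι → ι → ℂ) (ψ : ι → ℂ) : ℂ :=
  ∑ a, ∑ b, ∑ c, ∑ d, L a b c d * quarticMonomial a b c d ψ

@[fun_prop]
lemma continuous_quarticForm {ι : Type*} [Fintype ι] (L : ι → ι → ι → ι → ℂ) :
    Continuous (quarticForm L) := by
  unfold quarticForm
  fun_prop

def quarticCharge {n : ℕ} (a b c d : Fin n) : ℤ := a.val - b.val - c.val + d.val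

lemma abs_quarticCharge_lt {n : ℕ} (a b c d : Fin n) : |quarticCharge a b c d| < 2 * n := by
  have := a.isLt; have := b.isLt; have := c.isLt; have := d.isLt
  rw [abs_lt, quarticCharge]
  omega

lemma quarticMonomial_phase_mul {n : ℕ} {z : ℂ} (hz : ‖z‖ = 1) (a b c d : Fin n)
    (ψ : Fin n → ℂ) :
    quarticMonomial a b c d (fun i => z ^ (i : ℕ) * ψ i) =
      z ^ quarticCharge a b c d * quarticMonomial a b c d ψ := by
  have hz0 : z ≠ 0 := norm_ne_zero_iff.mp (hz ▸ one_ne_zero)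
  have hconj (k : ℕ) : conj (z ^ k) = (z ^ k)⁻¹ := by
    rw [map_pow, ← inv_eq_conj hz, inv_pow]
  simp only [quarticMonomial, map_mul, hconj, quarticCharge, zpow_add₀ hz0, zpow_sub₀ hz0,
    zpow_natCast]
  field_simp

def unitVectors (ι : Type*) [Fintype ι] : Set (ι → ℂ) := {ψ | ∑ i, ‖ψ i‖ ^ 2 = 1}

lemma isCompact_unitVectors (ι : Type*) [Fintype ι] : IsCompact (unitVectors ι) := by
  refine Metric.isCompact_of_isClosed_isBounded (isClosed_eq (by fun_prop) continuous_const) ?_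
  refine (Metric.isBounded_closedBall (x := 0) (r := 1)).subset fun ψ hψ => ?_
  rw [mem_closedBall_zero_iff, pi_norm_le_iff_of_nonneg zero_le_one]
  intro i
  have hi : ‖ψ i‖ ^ 2 ≤ 1 := hψ ▸ Finset.single_le_sum (f := fun i => ‖ψ i‖ ^ 2)
    (fun _ _ => by positivity) (Finset.mem_univ i)
  exact (pow_le_one_iff_of_nonneg (norm_nonneg _) two_ne_zero).mp hi

lemma Continuous.integrable_of_ae_mem_isCompact {X E : Type*} [MeasurableSpace X]
    [TopologicalSpace X] [OpensMeasurableSpace X] [T2Space X] [NormedAddCommGroup E]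
    {μ : Measure X} [IsFiniteMeasure μ] {K : Set X} (hK : IsCompact K)
    (hμK : ∀ᵐ x ∂μ, x ∈ K) {f : X → E} (hf : Continuous f) : Integrable f μ := by
  rw [← Measure.restrict_eq_self_of_ae_mem hμK]
  exact hf.continuousOn.integrableOn_compact hK

lemma integral_quarticForm {ι : Type*} [Fintype ι] {μ : Measure (ι → ℂ)}
    (hint : ∀ a b c d, Integrable (quarticMonomial a b c d) μ) (L : ι → ι → ι → ι → ℂ) :
    ∫ ψ, quarticForm L ψ ∂μ =
      ∑ a, ∑ b, ∑ c, ∑ d, L a b c d * ∫ ψ, quarticMonomial a b c d ψ ∂μ := by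
  have hprod (ψ : ι → ℂ) : quarticForm L ψ = ∑ p : ι × ι × ι × ι,
      L p.1 p.2.1 p.2.2.1 p.2.2.2 * quarticMonomial p.1 p.2.1 p.2.2.1 p.2.2.2 ψ := by
    simp only [quarticForm, Fintype.sum_prod_type]
  simp only [hprod]
  rw [integral_finsetSum _ fun p _ => (hint _ _ _ _).const_mul _]
  simp only [integral_const_mul, Fintype.sum_prod_type]

lemma Matrix.diagonal_mem_unitaryGroup {ι : Type*} [Fintype ι] [DecidableEq ι] {v : ι → ℂ}
    (hv : ∀ i, ‖v i‖ = 1) : diagonal v ∈ unitaryGroup ι ℂ := by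
  rw [mem_unitaryGroup_iff, star_eq_conjTranspose, diagonal_conjTranspose,
    diagonal_mul_diagonal, ← diagonal_one]
  congr 1
  funext i
  simp [RCLike.mul_conj, hv i]

lemma Matrix.permMatrix_mem_unitaryGroup {ι : Type*} [Fintype ι] [DecidableEq ι]
    (σ : Equiv.Perm ι) : σ.permMatrix ℂ ∈ unitaryGroup ι ℂ := by
  rw [mem_unitaryGroup_iff, star_eq_conjTranspose, conjTranspose_permMatrix, ← permMatrix_mul,
    inv_mul_cancel, permMatrix_one]

lemma ofReal_sqrt_two_sq : (Real.sqrt 2 : ℂ) ^ 2 = 2 := by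
  rw [← ofReal_pow, Real.sq_sqrt zero_le_two, ofReal_ofNat]

lemma inv_ofReal_sqrt_two_pow_four : ((Real.sqrt 2 : ℂ)⁻¹) ^ 4 = 4⁻¹ := by
  rw [inv_pow, show 4 = 2 * 2 by rfl, pow_mul, ofReal_sqrt_two_sq]
  norm_num

def hadamardGate : Matrix (Fin 2) (Fin 2) ℂ := (Real.sqrt 2 : ℂ)⁻¹ • !![1, 1; 1, -1]

lemma hadamardGate_mem_unitaryGroup : hadamardGate ∈ unitaryGroup (Fin 2) ℂ := by
  rw [mem_unitaryGroup_iff]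
  ext i j
  fin_cases i <;> fin_cases j <;>
    simp [hadamardGate, mul_apply, Fin.sum_univ_two, one_apply, ← sq, ofReal_sqrt_two_sq] <;>
    norm_num

lemma quarticMonomial_hadamardGate_mulVec (ψ : Fin 2 → ℂ) :
    quarticMonomial 0 0 0 0 (hadamardGate *ᵥ ψ) = 4⁻¹ * quarticForm (fun _ _ _ _ => 1) ψ := by
  have h0 : (hadamardGate *ᵥ ψ) 0 = (Real.sqrt 2 : ℂ)⁻¹ * (ψ 0 + ψ 1) := by
    simp [hadamardGate, mulVec, dotProduct, Fin.sum_univ_two, mul_add]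
  simp only [quarticMonomial, quarticForm, h0, map_mul, map_add, map_inv₀, conj_ofReal,
    Fin.sum_univ_two, one_mul]
  linear_combination (ψ 0 + ψ 1) ^ 2 * (conj (ψ 0) + conj (ψ 1)) ^ 2 * inv_ofReal_sqrt_two_pow_four

def IsUnitarilyInvariant {ι : Type*} [Fintype ι] [DecidableEq ι] (μ : Measure (ι → ℂ)) : Prop :=
  ∀ V ∈ unitaryGroup ι ℂ, μ.map (V *ᵥ ·) = μ

namespace IsUnitarilyInvariant

section General

variable {ι : Type*} [Fintype ι] [DecidableEq ι] {μ : Measure (ι → ℂ)}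

lemma integral_comp_mulVec (hμ : IsUnitarilyInvariant μ) {V : Matrix ι ι ℂ}
    (hV : V ∈ unitaryGroup ι ℂ) {f : (ι → ℂ) → ℂ} (hf : Continuous f) :
    ∫ ψ, f (V *ᵥ ψ) ∂μ = ∫ ψ, f ψ ∂μ := by
  have hm : Measurable (V *ᵥ ·) := (mulVecLin V).continuous_of_finiteDimensional.measurable
  conv_rhs => rw [← hμ V hV]
  rw [integral_map hm.aemeasurable hf.aestronglyMeasurable]

lemma integral_eq_zero_of_comp_mulVec_eq_mul (hμ : IsUnitarilyInvariant μ) {V : Matrix ι ι ℂ}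
    (hV : V ∈ unitaryGroup ι ℂ) {f : (ι → ℂ) → ℂ} (hf : Continuous f) {c : ℂ} (hc : c ≠ 1)
    (hfV : ∀ ψ, f (V *ᵥ ψ) = c * f ψ) : ∫ ψ, f ψ ∂μ = 0 := by
  have h := hμ.integral_comp_mulVec hV hf
  simp only [hfV, integral_const_mul] at h
  have : (c - 1) * ∫ ψ, f ψ ∂μ = 0 := by rw [sub_mul, h, one_mul, sub_self]
  exact (mul_eq_zero.mp this).resolve_left (sub_ne_zero.mpr hc)

lemma integral_quarticMonomial_perm (hμ : IsUnitarilyInvariant μ) (σ : Equiv.Perm ι)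
    (a b c d : ι) :
    ∫ ψ, quarticMonomial (σ a) (σ b) (σ c) (σ d) ψ ∂μ = ∫ ψ, quarticMonomial a b c d ψ ∂μ := by
  rw [← hμ.integral_comp_mulVec (permMatrix_mem_unitaryGroup σ)
    (continuous_quarticMonomial a b c d)]
  simp only [permMatrix_mulVec]
  rfl

end General

lemma integral_quarticMonomial_eq_zero {n : ℕ} {μ : Measure (Fin n → ℂ)}
    (hμ : IsUnitarilyInvariant μ) {a b c d : Fin n} (h : quarticCharge a b c d ≠ 0) :
    ∫ ψ, quarticMonomial a b c d ψ ∂μ = 0 := by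
  have hn : 2 * n ≠ 0 := by have := a.pos; omega
  set ζ := exp (2 * Real.pi * I / (2 * n : ℕ))
  have hζ : IsPrimitiveRoot ζ (2 * n) := isPrimitiveRoot_exp _ hn
  have hζ1 : ‖ζ‖ = 1 := hζ.norm'_eq_one hn
  refine hμ.integral_eq_zero_of_comp_mulVec_eq_mul
    (diagonal_mem_unitaryGroup (v := fun i : Fin n => ζ ^ (i : ℕ)) fun i => by simp [hζ1])
    (continuous_quarticMonomial a b c d) (c := ζ ^ quarticCharge a b c d) ?_ fun ψ => ?_
  · rw [Ne, hζ.zpow_eq_one_iff_dvd]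
    exact fun hdvd => h (Int.eq_zero_of_abs_lt_dvd hdvd (mod_cast abs_quarticCharge_lt a b c d))
  · rw [← quarticMonomial_phase_mul hζ1]
    congr 1
    funext i
    exact mulVec_diagonal _ _ i

variable {μ : Measure (Fin 2 → ℂ)}

lemma integral_quarticMonomial_hadamard [IsFiniteMeasure μ] (hμ : IsUnitarilyInvariant μ)
    (hsphere : ∀ᵐ ψ ∂μ, ψ ∈ unitVectors (Fin 2)) :
    ∫ ψ, quarticMonomial 0 0 0 0 ψ ∂μ = 4⁻¹ * (∫ ψ, quarticMonomial 0 0 0 0 ψ ∂μ +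
      4 * ∫ ψ, quarticMonomial 0 0 1 1 ψ ∂μ + ∫ ψ, quarticMonomial 1 1 1 1 ψ ∂μ) := by
  have hint (a b c d : Fin 2) : Integrable (quarticMonomial a b c d) μ :=
    (continuous_quarticMonomial a b c d).integrable_of_ae_mem_isCompact
      (isCompact_unitVectors _) hsphere
  conv_lhs => rw [← hμ.integral_comp_mulVec hadamardGate_mem_unitaryGroup
    (continuous_quarticMonomial 0 0 0 0)]
  simp only [quarticMonomial_hadamardGate_mulVec, integral_const_mul, integral_quarticForm hint,
    one_mul]
  simp (disch := decide) only [Fin.sum_univ_two, hμ.integral_quarticMonomial_eq_zero]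
  rw [quarticMonomial_swap_middle 0 1 0 1, quarticMonomial_swap_outer 1 0 1 0,
    quarticMonomial_swap_outer 1 1 0 0, quarticMonomial_swap_middle 0 1 0 1]
  ring

lemma integral_quarticMonomial_normalization [IsProbabilityMeasure μ]
    (hsphere : ∀ᵐ ψ ∂μ, ψ ∈ unitVectors (Fin 2)) :
    ∫ ψ, quarticMonomial 0 0 0 0 ψ ∂μ + 2 * ∫ ψ, quarticMonomial 0 0 1 1 ψ ∂μ +
      ∫ ψ, quarticMonomial 1 1 1 1 ψ ∂μ = 1 := by
  have hsum : ∀ᵐ ψ ∂μ, quarticMonomial 0 0 0 0 ψ + 2 * quarticMonomial 0 0 1 1 ψ +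
      quarticMonomial 1 1 1 1 ψ = 1 := by
    filter_upwards [hsphere] with ψ hψ
    simp only [unitVectors, Set.mem_ofPred_eq, Fin.sum_univ_two] at hψ
    calc _ = (ψ 0 * conj (ψ 0) + ψ 1 * conj (ψ 1)) ^ 2 := by simp only [quarticMonomial]; ring
      _ = 1 := by
        rw [mul_conj', mul_conj', ← ofReal_pow, ← ofReal_pow, ← ofReal_add, hψ]
        simp
  have hint {f : (Fin 2 → ℂ) → ℂ} (hf : Continuous f) : Integrable f μ :=
    hf.integrable_of_ae_mem_isCompact (isCompact_unitVectors _) hsphere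
  have h := integral_congr_ae hsum
  rw [integral_add ?_ ?_, integral_add ?_ ?_, integral_const_mul, integral_const, probReal_univ,
    one_smul] at h
  · exact h
  all_goals exact hint (by fun_prop)

lemma integral_quarticMonomial_diag [IsProbabilityMeasure μ] (hμ : IsUnitarilyInvariant μ)
    (hsphere : ∀ᵐ ψ ∂μ, ψ ∈ unitVectors (Fin 2)) :
    ∫ ψ, quarticMonomial 0 0 0 0 ψ ∂μ = 3⁻¹ ∧ ∫ ψ, quarticMonomial 0 0 1 1 ψ ∂μ = 6⁻¹ ∧
      ∫ ψ, quarticMonomial 1 1 1 1 ψ ∂μ = 3⁻¹ := by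
  have hswap : ∫ ψ, quarticMonomial 1 1 1 1 ψ ∂μ = ∫ ψ, quarticMonomial 0 0 0 0 ψ ∂μ := by
    simpa using hμ.integral_quarticMonomial_perm (Equiv.swap 0 1) 0 0 0 0
  have hhad := hμ.integral_quarticMonomial_hadamard hsphere
  have hnorm := integral_quarticMonomial_normalization hsphere
  refine ⟨?_, ?_, ?_⟩
  · linear_combination (2 / 3 : ℂ) * hhad + (1 / 3 : ℂ) * hnorm - (1 / 6 : ℂ) * hswap
  · linear_combination (-2 / 3 : ℂ) * hhad + (1 / 6 : ℂ) * hnorm - (1 / 3 : ℂ) * hswap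
  · linear_combination (2 / 3 : ℂ) * hhad + (1 / 3 : ℂ) * hnorm + (5 / 6 : ℂ) * hswap

end IsUnitarilyInvariant

/-- Weingarten's formula `(δ_ab δ_cd + δ_ac δ_bd) / (d (d + 1))` for `d = 2`. -/
def haarQuarticMoment (a b c d : Fin 2) : ℂ :=
  ((if a = b ∧ c = d then 1 else 0) + (if a = c ∧ b = d then 1 else 0)) / 6

lemma IsUnitarilyInvariant.integral_quarticMonomial {μ : Measure (Fin 2 → ℂ)}
    [IsProbabilityMeasure μ] (hμ : IsUnitarilyInvariant μ)
    (hsphere : ∀ᵐ ψ ∂μ, ψ ∈ unitVectors (Fin 2)) (a b c d : Fin 2) :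
    ∫ ψ, quarticMonomial a b c d ψ ∂μ = haarQuarticMoment a b c d := by
  obtain ⟨h0000, h0011, h1111⟩ := hμ.integral_quarticMonomial_diag hsphere
  by_cases hq : quarticCharge a b c d = 0
  · fin_cases a <;> fin_cases b <;> fin_cases c <;> fin_cases d <;>
      simp [quarticCharge, haarQuarticMoment] at hq ⊢
    · rw [h0000]; norm_num
    · exact h0011
    · rwa [quarticMonomial_swap_middle]
    · rwa [quarticMonomial_swap_outer]
    · rwa [quarticMonomial_swap_outer, quarticMonomial_swap_middle]
    · rw [h1111]; norm_num
  · rw [hμ.integral_quarticMonomial_eq_zero hq]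
    fin_cases a <;> fin_cases b <;> fin_cases c <;> fin_cases d <;>
      simp [quarticCharge, haarQuarticMoment] at hq ⊢

lemma IsPrimitiveRoot.sum_range_pow_zpow_eq_zero {K : Type*} [Field K] {ζ : K} {m : ℕ}
    (hζ : IsPrimitiveRoot ζ m) {k : ℤ} (hk : ¬ (m : ℤ) ∣ k) :
    ∑ j ∈ Finset.range m, (ζ ^ j) ^ k = 0 := by
  have hne : ζ ^ k - 1 ≠ 0 := sub_ne_zero.mpr fun h => hk ((hζ.zpow_eq_one_iff_dvd k).mp h)
  have hpow : (ζ ^ k) ^ m = 1 := by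
    rw [← zpow_natCast, ← _root_.zpow_mul, mul_comm, _root_.zpow_mul, hζ.zpow_eq_one,
      _root_.one_zpow]
  have hgeom := geom_sum_mul (ζ ^ k) m
  rw [hpow, sub_self] at hgeom
  simp_rw [← zpow_natCast, ← _root_.zpow_mul, mul_comm _ k, _root_.zpow_mul, zpow_natCast]
  exact (mul_eq_zero.mp hgeom).resolve_right hne

lemma ketPlus_eq_phase_mul (θ : ℝ) :
    ketPlus θ = fun i : Fin 2 => exp (θ * I) ^ (i : ℕ) * (Real.sqrt 2 : ℂ)⁻¹ := by
  funext i
  fin_cases i <;> simp [ketPlus]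

lemma quarticMonomial_ketPlus (θ : ℝ) (a b c d : Fin 2) :
    quarticMonomial a b c d (ketPlus θ) = 4⁻¹ * exp (θ * I) ^ quarticCharge a b c d := by
  rw [ketPlus_eq_phase_mul, quarticMonomial_phase_mul (norm_exp_ofReal_mul_I θ)]
  simp only [quarticMonomial, map_inv₀, conj_ofReal]
  linear_combination exp (θ * I) ^ quarticCharge a b c d * inv_ofReal_sqrt_two_pow_four

lemma sum_exp_zpow_quarticCharge (a b c d : Fin 2) :
    ∑ j : Fin 8, exp (((j : ℕ) * Real.pi / 4 : ℝ) * I) ^ quarticCharge a b c d =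
      if quarticCharge a b c d = 0 then 8 else 0 := by
  set ζ := exp (2 * Real.pi * I / (8 : ℕ))
  have hζ : IsPrimitiveRoot ζ 8 := isPrimitiveRoot_exp 8 (by norm_num)
  have hj (j : ℕ) : exp ((j * Real.pi / 4 : ℝ) * I) = ζ ^ j := by
    rw [← exp_nat_mul]
    congr 1
    push_cast
    ring
  simp only [hj]
  rw [Fin.sum_univ_eq_sum_range (fun j => (ζ ^ j) ^ quarticCharge a b c d)]
  split_ifs with hq
  · simp [hq]
  · refine hζ.sum_range_pow_zpow_eq_zero fun hdvd => hq (Int.eq_zero_of_abs_lt_dvd hdvd ?_)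
    have := abs_quarticCharge_lt a b c d
    push_cast at this ⊢
    linarith

/-- The mean of the uniform averages over two octahedra sharing the poles `|0⟩, |1⟩`: the Pauli
eigenstates and their rotation by `π/4` about the `Z` axis. -/
def dummyTrapAverage {E : Type*} [AddCommGroup E] [Module ℝ E] (f : (Fin 2 → ℂ) → E) : E :=
  (6⁻¹ : ℝ) • (f ket0 + f ket1) + (12⁻¹ : ℝ) • ∑ j : Fin 8, f (ketPlus ((j : ℕ) * Real.pi / 4))

lemma dummyTrapAverage_re (f : (Fin 2 → ℂ) → ℂ) :
    dummyTrapAverage (fun ψ => (f ψ).re) = (dummyTrapAverage f).re := by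
  simp [dummyTrapAverage, re_sum, mul_add]

lemma dummyTrapAverage_sum {E ι : Type*} [AddCommGroup E] [Module ℝ E] (s : Finset ι)
    (f : ι → (Fin 2 → ℂ) → E) :
    dummyTrapAverage (fun ψ => ∑ i ∈ s, f i ψ) = ∑ i ∈ s, dummyTrapAverage (f i) := by
  simp only [dummyTrapAverage, smul_add, Finset.sum_add_distrib, Finset.smul_sum]
  rw [Finset.sum_comm (s := Finset.univ)]

lemma dummyTrapAverage_const_mul (c : ℂ) (f : (Fin 2 → ℂ) → ℂ) :
    dummyTrapAverage (fun ψ => c * f ψ) = c * dummyTrapAverage f := by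
  simp only [dummyTrapAverage, Finset.mul_sum, mul_add, mul_smul_comm]

lemma dummyTrapAverage_quarticForm (L : Fin 2 → Fin 2 → Fin 2 → Fin 2 → ℂ) :
    dummyTrapAverage (quarticForm L) =
      ∑ a, ∑ b, ∑ c, ∑ d, L a b c d * dummyTrapAverage (quarticMonomial a b c d) := by
  unfold quarticForm
  simp only [dummyTrapAverage_sum, dummyTrapAverage_const_mul]

lemma dummyTrapAverage_quarticMonomial (a b c d : Fin 2) :
    dummyTrapAverage (quarticMonomial a b c d) = haarQuarticMoment a b c d := by
  simp only [dummyTrapAverage, quarticMonomial_ketPlus, ← Finset.mul_sum,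
    sum_exp_zpow_quarticCharge]
  fin_cases a <;> fin_cases b <;> fin_cases c <;> fin_cases d <;>
    norm_num [quarticMonomial, ket0, ket1, quarticCharge, haarQuarticMoment]

lemma fid_eq_re_quarticForm (Λ : Matrix (Fin 2) (Fin 2) ℂ →ₗ[ℂ] Matrix (Fin 2) (Fin 2) ℂ)
    (ψ : Fin 2 → ℂ) : fid Λ ψ = (quarticForm (fun a b c d => Λ (single a b 1) c d) ψ).re := by
  have houter : outer ψ ψ = ∑ a, ∑ b, (ψ a * conj (ψ b)) • single a b 1 := by
    conv_lhs => rw [matrix_eq_sum_single (outer ψ ψ)]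
    simp only [outer, smul_single, smul_eq_mul, mul_one]
  rw [fid, houter]
  congr 1
  simp only [map_sum, map_smul]
  simp only [quarticForm, quarticMonomial, dotProduct, mulVec, Pi.star_apply, RCLike.star_def,
    Fin.sum_univ_two, Matrix.add_apply, Matrix.smul_apply, smul_eq_mul]
  ring

lemma integral_fid {μ : Measure (Fin 2 → ℂ)} [IsFiniteMeasure μ]
    (hsphere : ∀ᵐ ψ ∂μ, ψ ∈ unitVectors (Fin 2))
    (Λ : Matrix (Fin 2) (Fin 2) ℂ →ₗ[ℂ] Matrix (Fin 2) (Fin 2) ℂ) :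
    ∫ ψ, fid Λ ψ ∂μ = (∫ ψ, quarticForm (fun a b c d => Λ (single a b 1) c d) ψ ∂μ).re := by
  simp only [fid_eq_re_quarticForm]
  simpa only [RCLike.re_to_complex] using integral_re
    ((continuous_quarticForm _).integrable_of_ae_mem_isCompact (isCompact_unitVectors _) hsphere)

lemma dummyTrapAverage_fid (Λ : Matrix (Fin 2) (Fin 2) ℂ →ₗ[ℂ] Matrix (Fin 2) (Fin 2) ℂ) :
    dummyTrapAverage (fid Λ) =
      (dummyTrapAverage (quarticForm (fun a b c d => Λ (single a b 1) c d))).re := by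
  rw [← dummyTrapAverage_re]
  exact congrArg dummyTrapAverage (funext (fid_eq_re_quarticForm Λ))

/-- the Haar-average fidelity decomposes as
`F_tel = (1/3) F̄_dummy + (2/3) F̄_trap`, where `F̄_dummy` is the average fidelity
on `{|0⟩, |1⟩}` and `F̄_trap` the average over the eight states `|+_{iπ/4}⟩`. -/
theorem haar_fidelity_dummy_trap_decomposition
    (μ : Measure (Fin 2 → ℂ)) [IsProbabilityMeasure μ]
    (hsupp : ∀ᵐ ψ ∂μ, ‖ψ 0‖ ^ 2 + ‖ψ 1‖ ^ 2 = 1)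
    (hinv : ∀ V : Matrix (Fin 2) (Fin 2) ℂ, V ∈ Matrix.unitaryGroup (Fin 2) ℂ →
      μ.map (fun ψ => V.mulVec ψ) = μ)
    (Λ : Matrix (Fin 2) (Fin 2) ℂ →ₗ[ℂ] Matrix (Fin 2) (Fin 2) ℂ) :
    (∫ ψ, fid Λ ψ ∂μ) =
      (1 / 3) * ((fid Λ ket0 + fid Λ ket1) / 2) +
        (2 / 3) * ((1 / 8) * ∑ i : Fin 8, fid Λ (ketPlus ((i : ℕ) * Real.pi / 4))) := by
  have hsphere : ∀ᵐ ψ ∂μ, ψ ∈ unitVectors (Fin 2) :=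
    hsupp.mono fun ψ hψ => by simpa [unitVectors, Fin.sum_univ_two] using hψ
  have hint (a b c d : Fin 2) : Integrable (quarticMonomial a b c d) μ :=
    (continuous_quarticMonomial a b c d).integrable_of_ae_mem_isCompact
      (isCompact_unitVectors _) hsphere
  have hrhs : (1 / 3) * ((fid Λ ket0 + fid Λ ket1) / 2) +
      (2 / 3) * ((1 / 8) * ∑ i : Fin 8, fid Λ (ketPlus ((i : ℕ) * Real.pi / 4))) =
      dummyTrapAverage (fid Λ) := by
    simp only [dummyTrapAverage, smul_eq_mul]
    ring
  rw [hrhs, integral_fid hsphere, integral_quarticForm hint, dummyTrapAverage_fid,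
    dummyTrapAverage_quarticForm]
  simp only [IsUnitarilyInvariant.integral_quarticMonomial hinv hsphere,
    dummyTrapAverage_quarticMonomial]
end
end
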